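/- Let θ > 0, q > 0, and 0 < μ ≤ q be real numbers, and let (a_k)_{k≥0} be a sequence of nonnegative reals. Define b_n := (∑_{k=n}^{∞} a_k^{μ})^{1/μ} for each n ≥ 0 (allowing the value +∞). Then there is a constant C depending only on θ, q, μ such that ∑_{n=0}^{∞} 2^{n·θ·q} · b_n^{q} ≤ C · ∑_{n=0}^{∞} 2^{n·θ·q} · a_n^{q}. -/

import Mathlib

/-! With `p = q / μ ≥ 1`, `d k = 2 ^ (k θ μ) * a k ^ μ` and `u = 2 ^ (-θ μ) < 1`, the `n`-th term on
the left is `(∑ j, u ^ j * d (n + j)) ^ p`. Jensen's inequality for the weights `u ^ j`, of total mass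
`(1 - u)⁻¹`, bounds it by `(1 - u)⁻¹ ^ (p - 1) * ∑ j, u ^ j * d (n + j) ^ p`; summing over `n` and
exchanging the two sums gives the constant `(1 - u)⁻¹ ^ p`. -/
open scoped ENNReal

namespace ENNReal

theorem inner_le_weight_mul_Lp_tsum {ι : Type*} {p : ℝ} (hp : 1 ≤ p) (w f : ι → ℝ≥0∞) :
    ∑' i, w i * f i ≤ (∑' i, w i) ^ (1 - p⁻¹) * (∑' i, w i * f i ^ p) ^ p⁻¹ := by
  refine ENNReal.summable.tsum_le_of_sum_le fun s => ?_
  calc ∑ i ∈ s, w i * f i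
      ≤ (∑ i ∈ s, w i) ^ (1 - p⁻¹) * (∑ i ∈ s, w i * f i ^ p) ^ p⁻¹ :=
        inner_le_weight_mul_Lp_of_nonneg s hp w f
    _ ≤ (∑' i, w i) ^ (1 - p⁻¹) * (∑' i, w i * f i ^ p) ^ p⁻¹ := by
        have h₀ : 0 ≤ 1 - p⁻¹ := sub_nonneg.2 (inv_le_one_of_one_le₀ hp)
        gcongr <;> exact ENNReal.sum_le_tsum s

theorem rpow_tsum_mul_le {ι : Type*} {p : ℝ} (hp : 1 ≤ p) (w f : ι → ℝ≥0∞) :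
    (∑' i, w i * f i) ^ p ≤ (∑' i, w i) ^ (p - 1) * ∑' i, w i * f i ^ p := by
  have hp₀ : 0 < p := zero_lt_one.trans_le hp
  calc (∑' i, w i * f i) ^ p
      ≤ ((∑' i, w i) ^ (1 - p⁻¹) * (∑' i, w i * f i ^ p) ^ p⁻¹) ^ p := by
        gcongr; exact inner_le_weight_mul_Lp_tsum hp w f
    _ = (∑' i, w i) ^ (p - 1) * ∑' i, w i * f i ^ p := by
        rw [mul_rpow_of_nonneg _ _ hp₀.le, ← rpow_mul, ← rpow_mul, sub_mul, one_mul,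
          inv_mul_cancel₀ hp₀.ne', rpow_one]

theorem tsum_ite_le_eq_tsum_add (f : ℕ → ℝ≥0∞) (n : ℕ) :
    ∑' k, (if n ≤ k then f k else 0) = ∑' j, f (n + j) := by
  rw [← ENNReal.summable.sum_add_tsum_nat_add' (k := n),
    Finset.sum_eq_zero fun k hk => if_neg (by simpa using hk), zero_add]
  simp [add_comm]

theorem tsum_rpow_tsum_geometric_mul_le {p : ℝ} (hp : 1 ≤ p) (u : ℝ≥0∞) (d : ℕ → ℝ≥0∞) :
    ∑' n, (∑' j, u ^ j * d (n + j)) ^ p ≤ (1 - u)⁻¹ ^ p * ∑' k, d k ^ p := by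
  set A := (1 - u)⁻¹
  calc ∑' n, (∑' j, u ^ j * d (n + j)) ^ p
      ≤ ∑' n, A ^ (p - 1) * ∑' j, u ^ j * d (n + j) ^ p := by
        gcongr with n
        simpa only [tsum_geometric] using rpow_tsum_mul_le hp (u ^ ·) (fun j => d (n + j))
    _ = A ^ (p - 1) * ∑' j, u ^ j * ∑' n, d (n + j) ^ p := by
        rw [ENNReal.tsum_mul_left, ENNReal.tsum_comm]
        simp only [ENNReal.tsum_mul_left]
    _ ≤ A ^ (p - 1) * ∑' j, u ^ j * ∑' k, d k ^ p := by
        gcongr A ^ (p - 1) * ∑' j, u ^ j * ?_ with j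
        exact tsum_comp_le_tsum_of_injective (add_left_injective j) _
    _ = A ^ p * ∑' k, d k ^ p := by
        have hA : A ^ p = A ^ (p - 1) * A := by
          simpa using rpow_add_of_nonneg (x := A) (p - 1) 1 (by linarith) zero_le_one
        rw [ENNReal.tsum_mul_right, tsum_geometric, hA, mul_assoc]

end ENNReal

open ENNReal in
theorem discrete_hardy_tail_general (θ q μ : ℝ) (hθ : 0 < θ) (hμ : 0 < μ)
    (hμq : μ ≤ q) :
    ∃ C : ℝ≥0∞, C ≠ ∞ ∧ ∀ a : ℕ → ℝ≥0∞, (∀ k, a k ≠ ∞) →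
      (∑' n : ℕ, (2 : ℝ≥0∞) ^ ((n : ℝ) * θ * q) *
          ((∑' k : ℕ, if n ≤ k then (a k) ^ μ else 0) ^ (1 / μ)) ^ q)
        ≤ C * ∑' n : ℕ, (2 : ℝ≥0∞) ^ ((n : ℝ) * θ * q) * (a n) ^ q := by
  set p := q / μ
  have hp : 1 ≤ p := (one_le_div hμ).2 hμq
  have hp₀ : 0 ≤ p := zero_le_one.trans hp
  have hμp : μ * p = q := mul_div_cancel₀ q hμ.ne'
  set u : ℝ≥0∞ := 2 ^ (-(θ * μ))
  have hu : u < 1 := rpow_lt_one_of_one_lt_of_neg one_lt_two (neg_neg_of_pos (mul_pos hθ hμ))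
  have hshift (n j : ℕ) : u ^ j * 2 ^ (((n + j : ℕ) : ℝ) * θ * μ) = 2 ^ ((n : ℝ) * θ * μ) := by
    rw [← rpow_natCast, ← rpow_mul, ← rpow_add _ _ two_ne_zero ofNat_ne_top]
    congr 1; push_cast; ring
  refine ⟨(1 - u)⁻¹ ^ p, rpow_ne_top_of_nonneg hp₀
    (inv_ne_top.2 (tsub_pos_of_lt hu).ne'), fun a _ => ?_⟩
  set d : ℕ → ℝ≥0∞ := fun k => 2 ^ ((k : ℝ) * θ * μ) * a k ^ μ
  have hterm (n : ℕ) : (2 : ℝ≥0∞) ^ ((n : ℝ) * θ * q) *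
      ((∑' k : ℕ, if n ≤ k then (a k) ^ μ else 0) ^ (1 / μ)) ^ q =
      (∑' j, u ^ j * d (n + j)) ^ p := by
    have hpow (x : ℝ≥0∞) : (x ^ (1 / μ)) ^ q = x ^ p := by
      rw [← rpow_mul, one_div_mul_eq_div]
    calc _ = (2 ^ ((n : ℝ) * θ * μ)) ^ p * (∑' j, a (n + j) ^ μ) ^ p := by
          rw [hpow, tsum_ite_le_eq_tsum_add (a · ^ μ), ← rpow_mul, mul_assoc _ μ p, hμp]
      _ = (∑' j, u ^ j * d (n + j)) ^ p := by
          rw [← mul_rpow_of_nonneg _ _ hp₀, ← ENNReal.tsum_mul_left]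
          simp only [d, ← mul_assoc, hshift]
  have hd (k : ℕ) : d k ^ p = 2 ^ ((k : ℝ) * θ * q) * a k ^ q := by
    rw [mul_rpow_of_nonneg _ _ hp₀, ← rpow_mul, ← rpow_mul, mul_assoc _ μ p, hμp]
  calc _ = ∑' n, (∑' j, u ^ j * d (n + j)) ^ p := tsum_congr hterm
    _ ≤ (1 - u)⁻¹ ^ p * ∑' k, d k ^ p := tsum_rpow_tsum_geometric_mul_le hp u d
    _ = _ := by simp only [hd]

/-- Discrete Hardy inequality (tail version).  For `θ > 0`, `q > 0`, `0 < μ ≤ q` there is a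
constant `C` (depending only on `θ, q, μ`) such that for every sequence `(a_k)` of
nonnegative reals, with `b_n := (∑_{k=n}^∞ a_k^μ)^{1/μ}` (possibly `+∞`),
`∑_n 2^{nθq} b_n^q ≤ C · ∑_n 2^{nθq} a_n^q`.  Formulated in `ℝ≥0∞` so that infinite
values of `b_n` are allowed. -/
theorem discrete_hardy_tail (θ q μ : ℝ) (hθ : 0 < θ) (hq : 0 < q) (hμ : 0 < μ)
    (hμq : μ ≤ q) :
    ∃ C : ℝ≥0∞, C ≠ ∞ ∧ ∀ a : ℕ → ℝ≥0∞, (∀ k, a k ≠ ∞) →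
      (∑' n : ℕ, (2 : ℝ≥0∞) ^ ((n : ℝ) * θ * q) *
          ((∑' k : ℕ, if n ≤ k then (a k) ^ μ else 0) ^ (1 / μ)) ^ q)
        ≤ C * ∑' n : ℕ, (2 : ℝ≥0∞) ^ ((n : ℝ) * θ * q) * (a n) ^ q :=
  discrete_hardy_tail_general θ q μ hθ hμ hμq
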